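/- arXiv:1110.1527 — 5 statements merged into one kernel-verified Lean document; each statement's English description precedes it below -/
import Mathlib

section
/- Let μ be a symmetric probability measure on ℝ (i.e., μ(S) = μ(−S) for every Borel set S) and let ν be a symmetric probability measure with compact support. Suppose there is a sequence t_k → ∞ of positive reals such that G_μ(i t_k) = G_ν(i t_k) for all k, where G denotes the Cauchy transform. Then μ has finite moments of all orders, the moments of μ equal those of ν, and hence μ = ν. -/
/-!
Taking imaginary parts, `G_μ(i t) = G_ν(i t)` says `∫ (u² + t²)⁻¹ dμ = ∫ (u² + t²)⁻¹ dν` for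
`t = t_k`. Splitting `u^{2n} = u^{2n+2} / (u² + t²) + t² u^{2n} / (u² + t²)`, and using that
`t² u^{2n} / (u² + t²) → u^{2n}` from below as `t → ∞`, an induction on `n` gives equality of all
the integrals `∫ u^{2n} / (u² + t_k²)` and of all even moments. Computing these as `ℝ≥0∞`-valued
integrals makes the splitting additive, so finiteness is only ever needed on the side of `ν`.
The even moments of `μ` are then bounded by `R^{2n}` when `ν` lives on `[-R, R]`, which forces `μ`
to live on `[-R, R]` too; its odd moments vanish by symmetry, and on a compact interval the
moments determine the measure by Weierstrass approximation.
-/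

open MeasureTheory Filter Topology ENNReal

theorem tendsto_lintegral_of_le_of_tendsto {α ι : Type*} [MeasurableSpace α] {μ : Measure α}
    {l : Filter ι} [l.IsCountablyGenerated] [l.NeBot] {f : ι → α → ℝ≥0∞} {g : α → ℝ≥0∞}
    (hf : ∀ i, AEMeasurable (f i) μ) (hle : ∀ i, f i ≤ g)
    (hlim : ∀ x, Tendsto (f · x) l (𝓝 (g x))) :
    Tendsto (fun i => ∫⁻ x, f i x ∂μ) l (𝓝 (∫⁻ x, g x ∂μ)) := by
  refine tendsto_of_le_liminf_of_limsup_le ?_ ?_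
  · calc ∫⁻ x, g x ∂μ = ∫⁻ x, liminf (f · x) l ∂μ := by
          simp only [fun x => (hlim x).liminf_eq]
      _ ≤ _ := lintegral_liminf_le' hf
  · exact limsup_le_of_le (h := .of_forall fun i => lintegral_mono (hle i))

theorem ae_le_of_forall_lintegral_pow_le {α : Type*} [MeasurableSpace α] {μ : Measure α}
    {f : α → ℝ≥0∞} (hf : AEMeasurable f μ) {C : ℝ≥0∞}
    (h : ∀ n : ℕ, ∫⁻ x, f x ^ n ∂μ ≤ C ^ n) : ∀ᵐ x ∂μ, f x ≤ C := by
  rcases eq_or_ne C ∞ with rfl | hC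
  · exact ae_of_all _ fun _ => le_top
  have hnull : ∀ c, C < c → c < ∞ → μ {x | c ≤ f x} = 0 := by
    intro c hCc hc
    have hc0 : c ≠ 0 := (bot_le.trans_lt hCc).ne'
    set q := C / c
    have hbound : ∀ n : ℕ, μ {x | c ≤ f x} ≤ q ^ n := by
      intro n
      refine (ENNReal.mul_le_mul_iff_right (pow_ne_zero n hc0) (pow_ne_top hc.ne)).1 ?_
      calc c ^ n * μ {x | c ≤ f x} ≤ c ^ n * μ {x | c ^ n ≤ f x ^ n} := by
            gcongr c ^ n * ?_
            exact measure_mono fun x (hx : c ≤ f x) => pow_le_pow_left₀ zero_le hx n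
        _ ≤ ∫⁻ x, f x ^ n ∂μ := mul_meas_ge_le_lintegral₀ (hf.pow_const n) _
        _ ≤ C ^ n := h n
        _ = c ^ n * q ^ n := by rw [← mul_pow, ENNReal.mul_div_cancel hc0 hc.ne]
    have hq : q < 1 := (ENNReal.div_lt_iff (.inl hc0) (.inl hc.ne)).2 (by simpa using hCc)
    exact le_antisymm (ge_of_tendsto' (ENNReal.tendsto_pow_atTop_nhds_zero_of_lt_one hq)
      hbound) bot_le
  obtain ⟨c, -, hcC, hc⟩ := exists_seq_strictAnti_tendsto' hC.lt_top
  have hlt : ∀ᵐ x ∂μ, ∀ k, f x < c k := ae_all_iff.2 fun k => by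
    simpa [ae_iff] using hnull (c k) (hcC k).1 (hcC k).2
  filter_upwards [hlt] with x hx
  exact ge_of_tendsto' hc fun k => (hx k).le

theorem integrable_inv_I_mul_sub (ρ : Measure ℝ) [IsFiniteMeasure ρ] {s : ℝ} (hs : s ≠ 0) :
    Integrable (fun u : ℝ => (Complex.I * s - u)⁻¹) ρ := by
  refine .of_bound (by fun_prop) |s|⁻¹ (ae_of_all _ fun u => ?_)
  rw [norm_inv]
  refine inv_anti₀ (abs_pos.2 hs) ?_
  simpa using Complex.abs_im_le_norm (Complex.I * s - u)

theorem integrable_inv_sq_add_sq (ρ : Measure ℝ) [IsFiniteMeasure ρ] {s : ℝ} (hs : s ≠ 0) :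
    Integrable (fun u : ℝ => (u ^ 2 + s ^ 2)⁻¹) ρ := by
  refine .of_bound (by fun_prop) (s ^ 2)⁻¹ (ae_of_all _ fun u => ?_)
  rw [Real.norm_eq_abs, abs_of_pos (by positivity)]
  exact inv_anti₀ (by positivity) (le_add_of_nonneg_left (sq_nonneg u))

theorem im_integral_inv_I_mul_sub (ρ : Measure ℝ) [IsFiniteMeasure ρ] {s : ℝ} (hs : s ≠ 0) :
    (∫ u : ℝ, (Complex.I * s - u)⁻¹ ∂ρ).im = -s * ∫ u : ℝ, (u ^ 2 + s ^ 2)⁻¹ ∂ρ := by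
  rw [← integral_const_mul, ← RCLike.im_to_complex, ← integral_im (integrable_inv_I_mul_sub ρ hs)]
  congr 1 with u
  simp only [RCLike.inv_im, RCLike.im_to_complex, Complex.sub_im, Complex.mul_im, Complex.I_re,
    Complex.ofReal_im, mul_zero, Complex.I_im, Complex.ofReal_re, one_mul, zero_add, sub_zero,
    RCLike.normSq_to_complex, Complex.normSq_apply, Complex.sub_re, Complex.mul_re, zero_mul,
    sub_self, zero_sub, mul_neg, neg_mul, neg_neg]
  ring

theorem lintegral_inv_sq_add_sq_eq_of_integral_inv_I_mul_sub_eq {μ ν : Measure ℝ}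
    [IsFiniteMeasure μ] [IsFiniteMeasure ν] {s : ℝ} (hs : s ≠ 0)
    (h : ∫ u : ℝ, (Complex.I * s - u)⁻¹ ∂μ = ∫ u : ℝ, (Complex.I * s - u)⁻¹ ∂ν) :
    ∫⁻ u, ENNReal.ofReal ((u ^ 2 + s ^ 2)⁻¹) ∂μ = ∫⁻ u, ENNReal.ofReal ((u ^ 2 + s ^ 2)⁻¹) ∂ν := by
  have him := congrArg Complex.im h
  rw [im_integral_inv_I_mul_sub μ hs, im_integral_inv_I_mul_sub ν hs] at him
  have hpos : ∀ u : ℝ, 0 ≤ (u ^ 2 + s ^ 2)⁻¹ := fun u => by positivity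
  rw [← ofReal_integral_eq_lintegral_ofReal (integrable_inv_sq_add_sq μ hs) (ae_of_all _ hpos),
    ← ofReal_integral_eq_lintegral_ofReal (integrable_inv_sq_add_sq ν hs) (ae_of_all _ hpos),
    mul_left_cancel₀ (neg_ne_zero.2 hs) him]

theorem pow_eq_pow_succ_div_add_sq_mul_pow_div {s : ℝ} (hs : s ≠ 0) (n : ℕ) (u : ℝ) :
    u ^ (2 * n) =
      u ^ (2 * (n + 1)) / (u ^ 2 + s ^ 2) + s ^ 2 * (u ^ (2 * n) / (u ^ 2 + s ^ 2)) := by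
  have : u ^ 2 + s ^ 2 ≠ 0 := by positivity
  field_simp
  ring

theorem lintegral_pow_succ_div_eq {μ ν : Measure ℝ} {s : ℝ} (hs : s ≠ 0) {n : ℕ}
    (hmom : ∫⁻ u, ENNReal.ofReal (u ^ (2 * n)) ∂μ = ∫⁻ u, ENNReal.ofReal (u ^ (2 * n)) ∂ν)
    (hfin : ∫⁻ u, ENNReal.ofReal (u ^ (2 * n)) ∂ν ≠ ∞)
    (h : ∫⁻ u, ENNReal.ofReal (u ^ (2 * n) / (u ^ 2 + s ^ 2)) ∂μ =
      ∫⁻ u, ENNReal.ofReal (u ^ (2 * n) / (u ^ 2 + s ^ 2)) ∂ν) :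
    ∫⁻ u, ENNReal.ofReal (u ^ (2 * (n + 1)) / (u ^ 2 + s ^ 2)) ∂μ =
      ∫⁻ u, ENNReal.ofReal (u ^ (2 * (n + 1)) / (u ^ 2 + s ^ 2)) ∂ν := by
  have split : ∀ ρ : Measure ℝ, ∫⁻ u, ENNReal.ofReal (u ^ (2 * n)) ∂ρ =
      ∫⁻ u, ENNReal.ofReal (u ^ (2 * (n + 1)) / (u ^ 2 + s ^ 2)) ∂ρ +
        ENNReal.ofReal (s ^ 2) * ∫⁻ u, ENNReal.ofReal (u ^ (2 * n) / (u ^ 2 + s ^ 2)) ∂ρ := by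
    intro ρ
    rw [← lintegral_const_mul' _ _ ofReal_ne_top, ← lintegral_add_left (by fun_prop)]
    congr 1 with u
    have hnn : ∀ m : ℕ, 0 ≤ u ^ (2 * m) / (u ^ 2 + s ^ 2) := fun m => by
      have := (even_two_mul m).pow_nonneg u; positivity
    rw [← ofReal_mul (sq_nonneg s), ← ofReal_add (hnn _) (by have := hnn n; positivity),
      ← pow_eq_pow_succ_div_add_sq_mul_pow_div hs]
  have hfin' : ENNReal.ofReal (s ^ 2) *
      ∫⁻ u, ENNReal.ofReal (u ^ (2 * n) / (u ^ 2 + s ^ 2)) ∂ν ≠ ∞ :=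
    ne_top_of_le_ne_top hfin ((split ν).symm ▸ le_add_self)
  rw [← ENNReal.add_left_inj hfin', ← split ν, ← h, ← split μ, hmom]

theorem tendsto_sq_mul_lintegral_pow_div (ρ : Measure ℝ) {t : ℕ → ℝ}
    (ht : Tendsto t atTop atTop) (n : ℕ) :
    Tendsto (fun k => ENNReal.ofReal (t k ^ 2) *
        ∫⁻ u, ENNReal.ofReal (u ^ (2 * n) / (u ^ 2 + t k ^ 2)) ∂ρ)
      atTop (𝓝 (∫⁻ u, ENNReal.ofReal (u ^ (2 * n)) ∂ρ)) := by
  have hnn : ∀ u : ℝ, 0 ≤ u ^ (2 * n) := fun u => (even_two_mul n).pow_nonneg u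
  simp_rw [← lintegral_const_mul' _ _ ofReal_ne_top, ← ofReal_mul (sq_nonneg _)]
  refine tendsto_lintegral_of_le_of_tendsto (fun k => by fun_prop) (fun k u => ?_) fun u => ?_
  · refine ofReal_le_ofReal ?_
    rw [mul_div_assoc']
    refine div_le_of_le_mul₀ (by positivity) (hnn u) ?_
    nlinarith [hnn u, sq_nonneg u]
  · refine (ENNReal.continuous_ofReal.tendsto _).comp ?_
    have hinv : Tendsto (fun k => (t k ^ 2)⁻¹) atTop (𝓝 0) :=
      tendsto_inv_atTop_zero.comp ((tendsto_pow_atTop two_ne_zero).comp ht)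
    have hlim := ((tendsto_const_nhds (x := 1)).add (hinv.const_mul (u ^ 2))).inv₀
      (by simp) |>.const_mul (u ^ (2 * n))
    simp only [mul_zero, add_zero, inv_one, mul_one] at hlim
    refine hlim.congr' ((ht.eventually_ne_atTop 0).mono fun k hk => ?_)
    field_simp
    ring

theorem lintegral_even_pow_eq_of_lintegral_inv_sq_add_sq_eq {μ ν : Measure ℝ} {t : ℕ → ℝ}
    (ht : ∀ k, t k ≠ 0) (htt : Tendsto t atTop atTop)
    (hν : ∀ n : ℕ, ∫⁻ u, ENNReal.ofReal (u ^ (2 * n)) ∂ν ≠ ∞)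
    (h : ∀ k, ∫⁻ u, ENNReal.ofReal ((u ^ 2 + t k ^ 2)⁻¹) ∂μ =
      ∫⁻ u, ENNReal.ofReal ((u ^ 2 + t k ^ 2)⁻¹) ∂ν) (n : ℕ) :
    ∫⁻ u, ENNReal.ofReal (u ^ (2 * n)) ∂μ = ∫⁻ u, ENNReal.ofReal (u ^ (2 * n)) ∂ν := by
  have hmom : ∀ n : ℕ, (∀ k, ∫⁻ u, ENNReal.ofReal (u ^ (2 * n) / (u ^ 2 + t k ^ 2)) ∂μ =
      ∫⁻ u, ENNReal.ofReal (u ^ (2 * n) / (u ^ 2 + t k ^ 2)) ∂ν) →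
      ∫⁻ u, ENNReal.ofReal (u ^ (2 * n)) ∂μ = ∫⁻ u, ENNReal.ofReal (u ^ (2 * n)) ∂ν :=
    fun n hn => tendsto_nhds_unique
      (by simpa only [hn] using tendsto_sq_mul_lintegral_pow_div μ htt n)
      (tendsto_sq_mul_lintegral_pow_div ν htt n)
  refine hmom n ?_
  induction n with
  | zero => simpa using h
  | succ n ih => exact fun k => lintegral_pow_succ_div_eq (ht k) (hmom n ih) (hν n) (ih k)

theorem exists_ae_abs_le_of_isCompact {ρ : Measure ℝ}
    (h : ∃ K : Set ℝ, IsCompact K ∧ ρ Kᶜ = 0) : ∃ R, 0 ≤ R ∧ ∀ᵐ u ∂ρ, |u| ≤ R := by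
  obtain ⟨K, hK, hK0⟩ := h
  obtain ⟨R, hR⟩ := isBounded_iff_forall_norm_le.1 hK.isBounded
  exact ⟨max R 0, le_max_right _ _, measure_mono_null
    (fun u hu huK => hu ((hR u huK).trans (le_max_left _ _))) hK0⟩

theorem integrable_pow_of_ae_abs_le {ρ : Measure ℝ} [IsFiniteMeasure ρ] {R : ℝ}
    (h : ∀ᵐ u ∂ρ, |u| ≤ R) (m : ℕ) : Integrable (fun u : ℝ => u ^ m) ρ :=
  .of_bound (by fun_prop) (R ^ m)
    (h.mono fun u hu => by simpa [abs_pow] using pow_le_pow_left₀ (abs_nonneg u) hu m)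

theorem ae_abs_le_of_lintegral_even_pow_le {μ ν : Measure ℝ} [IsProbabilityMeasure ν] {R : ℝ}
    (hR : 0 ≤ R) (hνR : ∀ᵐ u ∂ν, |u| ≤ R)
    (h : ∀ n : ℕ, ∫⁻ u, ENNReal.ofReal (u ^ (2 * n)) ∂μ ≤ ∫⁻ u, ENNReal.ofReal (u ^ (2 * n)) ∂ν) :
    ∀ᵐ u ∂μ, |u| ≤ R := by
  have hpow : ∀ (u : ℝ) (n : ℕ), ENNReal.ofReal (u ^ 2) ^ n = ENNReal.ofReal (u ^ (2 * n)) :=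
    fun u n => by rw [← ofReal_pow (sq_nonneg u), pow_mul]
  have hsq : ∀ᵐ u ∂μ, ENNReal.ofReal (u ^ 2) ≤ ENNReal.ofReal (R ^ 2) := by
    refine ae_le_of_forall_lintegral_pow_le (by fun_prop) fun n => ?_
    calc ∫⁻ u, ENNReal.ofReal (u ^ 2) ^ n ∂μ ≤ ∫⁻ u, ENNReal.ofReal (u ^ 2) ^ n ∂ν := by
          simpa only [hpow] using h n
      _ ≤ ∫⁻ _, ENNReal.ofReal (R ^ 2) ^ n ∂ν := lintegral_mono_ae <| hνR.mono fun u hu =>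
          pow_le_pow_left₀ zero_le (ofReal_le_ofReal (sq_le_sq' (abs_le.1 hu).1 (abs_le.1 hu).2)) n
      _ = ENNReal.ofReal (R ^ 2) ^ n := by simp
  filter_upwards [hsq] with u hu
  exact abs_le_of_sq_le_sq ((ofReal_le_ofReal_iff (sq_nonneg R)).1 hu) hR

theorem integral_odd_pow_eq_zero_of_map_neg_eq {ρ : Measure ℝ} (hρ : ρ.map (fun x : ℝ => -x) = ρ)
    {m : ℕ} (hm : Odd m) : ∫ u : ℝ, u ^ m ∂ρ = 0 := by
  have h : ∫ u : ℝ, u ^ m ∂ρ = ∫ u : ℝ, (-u) ^ m ∂ρ := by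
    conv_lhs => rw [← hρ]
    exact integral_map (by fun_prop) (by fun_prop)
  rw [funext fun u => hm.neg_pow u, integral_neg] at h
  linarith

theorem integral_eval_eq_sum_coeff_mul_integral_pow {ρ : Measure ℝ}
    (hρ : ∀ m : ℕ, Integrable (fun u : ℝ => u ^ m) ρ) (p : Polynomial ℝ) :
    ∫ u, p.eval u ∂ρ = ∑ i ∈ Finset.range (p.natDegree + 1), p.coeff i * ∫ u, u ^ i ∂ρ := by
  simp_rw [Polynomial.eval_eq_sum_range, ← integral_const_mul]
  exact integral_finsetSum _ fun i _ => (hρ i).const_mul _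

theorem integrable_eval_of_ae_abs_le {ρ : Measure ℝ} [IsFiniteMeasure ρ] {R : ℝ}
    (h : ∀ᵐ u ∂ρ, |u| ≤ R) (p : Polynomial ℝ) : Integrable (fun u => p.eval u) ρ := by
  simp_rw [Polynomial.eval_eq_sum_range]
  exact integrable_finsetSum _ fun i _ => (integrable_pow_of_ae_abs_le h i).const_mul _

theorem MeasureTheory.Measure.ext_of_forall_integral_pow_eq {μ ν : Measure ℝ} [IsFiniteMeasure μ]
    [IsFiniteMeasure ν] {R : ℝ} (hμ : ∀ᵐ u ∂μ, |u| ≤ R) (hν : ∀ᵐ u ∂ν, |u| ≤ R)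
    (h : ∀ m : ℕ, ∫ u, u ^ m ∂μ = ∫ u, u ^ m ∂ν) : μ = ν := by
  refine ext_of_forall_integral_eq_of_IsFiniteMeasure fun g => ?_
  have key : ∀ ε > 0,
      |∫ u, g u ∂μ - ∫ u, g u ∂ν| ≤ ε * (μ.real Set.univ + ν.real Set.univ) := by
    intro ε hε
    obtain ⟨p, hp⟩ := exists_polynomial_near_of_continuousOn (-R) R g g.continuous.continuousOn
      ε hε
    have approx : ∀ (ρ : Measure ℝ) [IsFiniteMeasure ρ], (∀ᵐ u ∂ρ, |u| ≤ R) →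
        |∫ u, g u ∂ρ - ∫ u, p.eval u ∂ρ| ≤ ε * ρ.real Set.univ := fun ρ _ hρ => by
      rw [← integral_sub (g.integrable ρ) (integrable_eval_of_ae_abs_le hρ p), ← Real.norm_eq_abs]
      refine norm_integral_le_of_norm_le_const <| hρ.mono fun u hu => ?_
      rw [Real.norm_eq_abs, abs_sub_comm]
      exact (hp u (abs_le.1 hu)).le
    have hpoly : ∫ u, p.eval u ∂μ = ∫ u, p.eval u ∂ν := by
      simp only [integral_eval_eq_sum_coeff_mul_integral_pow (integrable_pow_of_ae_abs_le hμ),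
        integral_eval_eq_sum_coeff_mul_integral_pow (integrable_pow_of_ae_abs_le hν), h]
    calc |∫ u, g u ∂μ - ∫ u, g u ∂ν|
        = |(∫ u, g u ∂μ - ∫ u, p.eval u ∂μ) - (∫ u, g u ∂ν - ∫ u, p.eval u ∂ν)| := by
          rw [hpoly, sub_sub_sub_cancel_right]
      _ ≤ ε * μ.real Set.univ + ε * ν.real Set.univ :=
          (abs_sub _ _).trans (add_le_add (approx μ hμ) (approx ν hν))
      _ = _ := by ring
  have hlim : Tendsto (fun ε : ℝ => ε * (μ.real Set.univ + ν.real Set.univ)) (𝓝[>] 0) (𝓝 0) := by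
    refine ((continuous_id.mul continuous_const).tendsto' 0 0 ?_).mono_left nhdsWithin_le_nhds
    simp
  exact sub_eq_zero.1 <| abs_nonpos_iff.1 <|
    ge_of_tendsto hlim (eventually_nhdsWithin_of_forall key)

/-- If a symmetric probability measure `μ` has the same Cauchy transform as a symmetric
compactly supported probability measure `ν` along a sequence `i t_k` with `t_k → ∞`,
then `μ` has all moments, its moments coincide with those of `ν`, and `μ = ν`. -/
theorem stmt6 (μ ν : Measure ℝ) [IsProbabilityMeasure μ] [IsProbabilityMeasure ν]
    (hμsymm : μ.map (fun x : ℝ => -x) = μ) (hνsymm : ν.map (fun x : ℝ => -x) = ν)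
    (hνcomp : ∃ K : Set ℝ, IsCompact K ∧ ν Kᶜ = 0)
    (t : ℕ → ℝ) (ht : ∀ k, 0 < t k) (htt : Tendsto t atTop atTop)
    (hG : ∀ k : ℕ,
      ∫ u : ℝ, (Complex.I * (t k) - (u : ℂ))⁻¹ ∂μ =
      ∫ u : ℝ, (Complex.I * (t k) - (u : ℂ))⁻¹ ∂ν) :
    (∀ m : ℕ, Integrable (fun u : ℝ => u ^ m) μ) ∧
    (∀ m : ℕ, ∫ u : ℝ, u ^ m ∂μ = ∫ u : ℝ, u ^ m ∂ν) ∧ μ = ν := by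
  obtain ⟨R, hR, hνR⟩ := exists_ae_abs_le_of_isCompact hνcomp
  have hEven := lintegral_even_pow_eq_of_lintegral_inv_sq_add_sq_eq (fun k => (ht k).ne') htt
    (fun n => (integrable_pow_of_ae_abs_le hνR (2 * n)).lintegral_lt_top.ne)
    (fun k => lintegral_inv_sq_add_sq_eq_of_integral_inv_I_mul_sub_eq (ht k).ne' (hG k))
  have hμR := ae_abs_le_of_lintegral_even_pow_le hR hνR fun n => (hEven n).le
  have hmom : ∀ m : ℕ, ∫ u : ℝ, u ^ m ∂μ = ∫ u : ℝ, u ^ m ∂ν := by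
    intro m
    obtain ⟨n, rfl | rfl⟩ := Nat.even_or_odd' m
    · have hnn : ∀ u : ℝ, 0 ≤ u ^ (2 * n) := fun u => (even_two_mul n).pow_nonneg u
      rw [integral_eq_lintegral_of_nonneg_ae (ae_of_all _ hnn) (by fun_prop),
        integral_eq_lintegral_of_nonneg_ae (ae_of_all _ hnn) (by fun_prop), hEven n]
    · rw [integral_odd_pow_eq_zero_of_map_neg_eq hμsymm (odd_two_mul_add_one n),
        integral_odd_pow_eq_zero_of_map_neg_eq hνsymm (odd_two_mul_add_one n)]
  exact ⟨integrable_pow_of_ae_abs_le hμR, hmom, Measure.ext_of_forall_integral_pow_eq hμR hνR hmom⟩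
end

section
/- Fix real numbers κ₃ ≤ 0 and κ₄ with 0 < κ₄ < 1/4, and for x ∈ [−1,1] consider the polynomial P(r,x) = r⁴ − r² − 2κ₃ x r + (1 − 4x²)κ₄ in the real variable r. For x ∈ [−1, −1/2], P(·,x) has exactly one positive root. -/
/-- Uniqueness of positive roots of `r⁴ - r² + b r + c` when `b ≤ 0`, `c ≤ 0`. -/
lemma stmt9_key (b c r s : ℝ) (hb : b ≤ 0) (hc : c ≤ 0) (hr : 0 < r) (hs : 0 < s)
    (h1 : r ^ 4 - r ^ 2 + b * r + c = 0) (h2 : s ^ 4 - s ^ 2 + b * s + c = 0) :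
    r = s := by
  rcases lt_trichotomy r s with hlt | heq | hlt
  · exfalso
    have hA : (s - r) * ((s + r) * (s ^ 2 + r ^ 2) - (s + r) + b) = 0 := by
      linear_combination h2 - h1
    have hB : (s - r) * (c + r * s - r * s * (s ^ 2 + s * r + r ^ 2)) = 0 := by
      linear_combination s * h1 - r * h2
    have hne : s - r ≠ 0 := by linarith
    have hA' : (s + r) * (s ^ 2 + r ^ 2) - (s + r) + b = 0 :=
      (mul_eq_zero.mp hA).resolve_left hne
    have hB' : c + r * s - r * s * (s ^ 2 + s * r + r ^ 2) = 0 :=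
      (mul_eq_zero.mp hB).resolve_left hne
    nlinarith [mul_pos hr hs, mul_pos (mul_pos hr hs) hr, mul_pos (mul_pos hr hs) hs,
      sq_nonneg (r + s), sq_nonneg (r - s)]
  · exact heq
  · exfalso
    have hA : (r - s) * ((r + s) * (r ^ 2 + s ^ 2) - (r + s) + b) = 0 := by
      linear_combination h1 - h2
    have hB : (r - s) * (c + s * r - s * r * (r ^ 2 + r * s + s ^ 2)) = 0 := by
      linear_combination r * h2 - s * h1
    have hne : r - s ≠ 0 := by linarith
    have hA' : (r + s) * (r ^ 2 + s ^ 2) - (r + s) + b = 0 :=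
      (mul_eq_zero.mp hA).resolve_left hne
    have hB' : c + s * r - s * r * (r ^ 2 + r * s + s ^ 2) = 0 :=
      (mul_eq_zero.mp hB).resolve_left hne
    nlinarith [mul_pos hr hs, mul_pos (mul_pos hr hs) hr, mul_pos (mul_pos hr hs) hs,
      sq_nonneg (r + s), sq_nonneg (r - s)]

/-- For `κ₃ ≤ 0`, `0 < κ₄ < 1/4` and `x ∈ [−1, −1/2]`, the polynomial
`P(r) = r⁴ − r² − 2κ₃xr + (1 − 4x²)κ₄` has exactly one positive root. -/
theorem stmt9 (κ₃ κ₄ x : ℝ) (h3 : κ₃ ≤ 0) (h4 : 0 < κ₄) (h4' : κ₄ < 1 / 4)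
    (hx : x ∈ Set.Icc (-1 : ℝ) (-1 / 2)) :
    ∃! r : ℝ, 0 < r ∧
      r ^ 4 - r ^ 2 - 2 * κ₃ * x * r + (1 - 4 * x ^ 2) * κ₄ = 0 := by
  obtain ⟨hx1, hx2⟩ := hx
  set f : ℝ → ℝ := fun r => r ^ 4 - r ^ 2 - 2 * κ₃ * x * r + (1 - 4 * x ^ 2) * κ₄ with hf
  have hb : -(2 * κ₃ * x) ≤ 0 := by nlinarith
  have hx2' : 1 - 4 * x ^ 2 ≤ 0 := by nlinarith
  have hc : (1 - 4 * x ^ 2) * κ₄ ≤ 0 := mul_nonpos_of_nonpos_of_nonneg hx2' h4.le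
  have hcge : (1 - 4 * x ^ 2) * κ₄ ≥ -(3 / 4 : ℝ) := by nlinarith
  -- continuous
  have hcont : Continuous f := by
    apply Continuous.add
    · apply Continuous.sub
      · exact (continuous_pow 4).sub (continuous_pow 2)
      · exact continuous_const.mul continuous_id
    · exact continuous_const
  set R : ℝ := 2 - 2 * κ₃ with hR
  have hR2 : (2 : ℝ) ≤ R := by simp [hR]; linarith
  have hbl : -(R - 2) ≤ -(2 * κ₃ * x) := by
    rw [hR]
    nlinarith [mul_nonneg (neg_nonneg.mpr h3) (by linarith : (0:ℝ) ≤ 1 + x)]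
  have hRpos : (0:ℝ) < R := by linarith
  have hbR : -(2 * κ₃ * x) * R ≥ -((R - 2) * R) := by
    have := mul_le_mul_of_nonneg_right hbl hRpos.le
    nlinarith [this]
  have hfR : 0 ≤ f R := by
    have : f R = R ^ 4 - R ^ 2 + (-(2 * κ₃ * x)) * R + (1 - 4 * x ^ 2) * κ₄ := by
      simp [hf]; ring
    rw [this]
    nlinarith [hbR, hcge, sq_nonneg (R ^ 2 - 4), hR2, sq_nonneg R]
  have hfhalf : f (1 / 2) ≤ 0 := by
    have : f (1 / 2) = 1 / 16 - 1 / 4 + (-(2 * κ₃ * x)) * (1 / 2) + (1 - 4 * x ^ 2) * κ₄ := by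
      simp [hf]; ring
    rw [this]; linarith
  have hhR : (1 / 2 : ℝ) ≤ R := by linarith
  have hsub := intermediate_value_Icc hhR hcont.continuousOn
  have h0mem : (0 : ℝ) ∈ Set.Icc (f (1 / 2)) (f R) := ⟨hfhalf, hfR⟩
  obtain ⟨r, hrmem, hr0⟩ := hsub h0mem
  refine ⟨r, ⟨lt_of_lt_of_le (by norm_num) hrmem.1, hr0⟩, ?_⟩
  rintro s ⟨hs0, hseq⟩
  have hr0' : r ^ 4 - r ^ 2 + (-(2 * κ₃ * x)) * r + (1 - 4 * x ^ 2) * κ₄ = 0 := by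
    have := hr0; simp [hf] at this; linarith [this]
  have hs0' : s ^ 4 - s ^ 2 + (-(2 * κ₃ * x)) * s + (1 - 4 * x ^ 2) * κ₄ = 0 := by
    linarith [hseq]
  exact stmt9_key _ _ s r hb hc hs0 (lt_of_lt_of_le (by norm_num) hrmem.1) hs0' hr0'
end

section
/- Let μ be a probability measure on ℝ and let μ̄ be its reflection, μ̄(S) = μ(−S). If the free convolution μ ⊞ μ̄ equals the Dirac measure δ₀, then μ = δ_a for some a ∈ ℝ. -/
/-!
For a probability measure `ν` on `ℝ` with Cauchy transform `G(w) = ∫ (w - t)⁻¹ dν(t)`,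
`Im G(w) = -Im w · ∫ |w - t|⁻² dν`, while the variance identity gives
`|G(w)|² ≤ ∫ |w - t|⁻² dν`, with equality only if `(w - t)⁻¹` is `ν`-a.e. constant, i.e. `ν` is
a Dirac measure. Hence `Im w ≤ Im (1 / G(w))`: this is `Im φ ≤ 0` for Voiculescu transforms.
At `z = i(β + 1)` the condition for `δ₀` gives `φ₂(z) = -φ₁(z)`; both imaginary parts being
`≤ 0`, they vanish, so `μ` is in the equality case.
-/

open MeasureTheory Complex ComplexConjugate

theorem integrable_normSq_sub {α : Type*} [MeasurableSpace α] {ν : Measure α}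
    [IsFiniteMeasure ν] {f : α → ℂ} (hf : Integrable f ν)
    (hf2 : Integrable (fun a => normSq (f a)) ν) (c : ℂ) :
    Integrable (fun a => normSq (f a - c)) ν := by
  simp only [normSq_sub]
  exact (hf2.add (integrable_const _)).sub ((hf.mul_const _).re.const_mul _)

theorem integral_normSq_sub_integral {α : Type*} [MeasurableSpace α] {ν : Measure α}
    [IsProbabilityMeasure ν] {f : α → ℂ} (hf : Integrable f ν)
    (hf2 : Integrable (fun a => normSq (f a)) ν) :
    ∫ a, normSq (f a - ∫ b, f b ∂ν) ∂ν = ∫ a, normSq (f a) ∂ν - normSq (∫ a, f a ∂ν) := by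
  set c := ∫ a, f a ∂ν
  have hcross : Integrable (fun a => (f a * conj c).re) ν := (hf.mul_const _).re
  have hmean : ∫ a, (f a * conj c).re ∂ν = normSq c := by
    calc ∫ a, (f a * conj c).re ∂ν = (∫ a, f a * conj c ∂ν).re := integral_re (hf.mul_const _)
      _ = normSq c := by rw [integral_mul_const, mul_conj, ofReal_re]
  have hsum : Integrable (fun a => normSq (f a) + normSq c) ν := hf2.add (integrable_const _)
  simp only [normSq_sub]
  rw [integral_sub hsum (hcross.const_mul _),
    integral_add hf2 (integrable_const _), integral_const_mul, hmean, integral_const,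
    probReal_univ, one_smul]
  ring

theorem Measure.eq_dirac_of_ae_eq {ν : Measure ℝ} [IsProbabilityMeasure ν] {a : ℝ}
    (h : ∀ᵐ t ∂ν, t = a) : ν = Measure.dirac a := by
  calc ν = ν.map id := Measure.map_id.symm
    _ = ν.map (fun _ => a) := Measure.map_congr h
    _ = Measure.dirac a := by rw [Measure.map_const, measure_univ, one_smul]

noncomputable def cauchyTransform (ν : Measure ℝ) (w : ℂ) : ℂ := ∫ t : ℝ, (w - t)⁻¹ ∂ν

theorem im_inv_sub_ofReal (w : ℂ) (t : ℝ) :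
    ((w - t)⁻¹).im = -w.im * (normSq (w - t))⁻¹ := by
  simp [inv_im, div_eq_mul_inv]

section CauchyTransform

variable {ν : Measure ℝ} {w : ℂ}

theorem integrable_cauchyKernel (hG : cauchyTransform ν w ≠ 0) :
    Integrable (fun t : ℝ => (w - t)⁻¹) ν :=
  Integrable.of_integral_ne_zero hG

theorem cauchyTransform_im (hG : cauchyTransform ν w ≠ 0) :
    (cauchyTransform ν w).im = -w.im * ∫ t : ℝ, (normSq (w - t))⁻¹ ∂ν := by
  have him : ∫ t : ℝ, ((w - t)⁻¹).im ∂ν = (cauchyTransform ν w).im :=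
    integral_im (integrable_cauchyKernel hG)
  simp only [← him, im_inv_sub_ofReal, integral_const_mul]

theorem im_pos_of_cauchyTransform_im_neg (hG : (cauchyTransform ν w).im < 0) : 0 < w.im := by
  have hA : 0 ≤ ∫ t : ℝ, (normSq (w - t))⁻¹ ∂ν :=
    integral_nonneg fun t => inv_nonneg.mpr (normSq_nonneg _)
  rw [cauchyTransform_im (ne_of_apply_ne im hG.ne)] at hG
  by_contra! hw
  nlinarith

theorem integrable_normSq_inv_sub_ofReal (hG : (cauchyTransform ν w).im < 0) :
    Integrable (fun t : ℝ => normSq ((w - t)⁻¹)) ν := by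
  have hw : w.im ≠ 0 := (im_pos_of_cauchyTransform_im_neg hG).ne'
  have hf := integrable_cauchyKernel (ne_of_apply_ne im hG.ne)
  have hkernel :
      (fun t : ℝ => normSq ((w - t)⁻¹)) = fun t : ℝ => -w.im⁻¹ * ((w - t)⁻¹).im := by
    funext t
    rw [map_inv₀, im_inv_sub_ofReal]
    field_simp
  rw [hkernel]
  exact hf.im.const_mul _

variable [IsProbabilityMeasure ν]

theorem integral_normSq_sub_cauchyTransform (hG : (cauchyTransform ν w).im < 0) :
    ∫ t : ℝ, normSq ((w - t)⁻¹ - cauchyTransform ν w) ∂ν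
      = ∫ t : ℝ, (normSq (w - t))⁻¹ ∂ν - normSq (cauchyTransform ν w) := by
  unfold cauchyTransform
  simpa only [map_inv₀] using integral_normSq_sub_integral
    (integrable_cauchyKernel (ne_of_apply_ne im hG.ne)) (integrable_normSq_inv_sub_ofReal hG)

theorem normSq_cauchyTransform_le (hG : (cauchyTransform ν w).im < 0) :
    normSq (cauchyTransform ν w) ≤ ∫ t : ℝ, (normSq (w - t))⁻¹ ∂ν := by
  have hvar : 0 ≤ ∫ t : ℝ, normSq ((w - t)⁻¹ - cauchyTransform ν w) ∂ν :=
    integral_nonneg fun t => normSq_nonneg _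
  rw [integral_normSq_sub_cauchyTransform hG] at hvar
  linarith

theorem im_le_im_inv_cauchyTransform (hG : (cauchyTransform ν w).im < 0) :
    w.im ≤ ((cauchyTransform ν w)⁻¹).im := by
  have hw := im_pos_of_cauchyTransform_im_neg hG
  have hpos : 0 < normSq (cauchyTransform ν w) :=
    normSq_pos.mpr (ne_of_apply_ne im hG.ne)
  rw [inv_im, cauchyTransform_im (ne_of_apply_ne im hG.ne), le_div_iff₀ hpos]
  nlinarith [normSq_cauchyTransform_le hG]

theorem eq_dirac_of_im_inv_cauchyTransform_eq (hG : (cauchyTransform ν w).im < 0)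
    (h : ((cauchyTransform ν w)⁻¹).im = w.im) :
    ν = Measure.dirac (w - (cauchyTransform ν w)⁻¹).re := by
  set G := cauchyTransform ν w
  have hw := im_pos_of_cauchyTransform_im_neg hG
  have hG0 : G ≠ 0 := ne_of_apply_ne im hG.ne
  have hA : ∫ t : ℝ, (normSq (w - t))⁻¹ ∂ν = normSq G := by
    rw [inv_im, cauchyTransform_im hG0, div_eq_iff (normSq_pos.mpr hG0).ne'] at h
    exact mul_left_cancel₀ hw.ne' (by linarith)
  have hf := integrable_cauchyKernel hG0
  have hzero : ∀ᵐ t : ℝ ∂ν, normSq ((w - t)⁻¹ - G) = 0 :=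
    (integral_eq_zero_iff_of_nonneg (fun t => normSq_nonneg _)
      (integrable_normSq_sub hf (integrable_normSq_inv_sub_ofReal hG) G)).mp
      (by rw [integral_normSq_sub_cauchyTransform hG, hA, sub_self])
  refine Measure.eq_dirac_of_ae_eq ?_
  filter_upwards [hzero] with t ht
  have hinv : (w - t)⁻¹ = G := sub_eq_zero.mp (normSq_eq_zero.mp ht)
  have ht' : (t : ℂ) = w - G⁻¹ := by rw [← hinv, inv_inv]; ring
  simpa using congrArg re ht'

end CauchyTransform

/-- If the free convolution of `μ` with its reflection `μ̄` is `δ₀` (expressed via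
additivity of Voiculescu transforms on a domain `Γ_{α,β}`: `F_μ(z+φ₁(z)) = z`,
`F_μ̄(z+φ₂(z)) = z` and `F_{δ₀}(z+φ₁(z)+φ₂(z)) = z`), then `μ` is a Dirac measure. -/
theorem stmt13 (μ : Measure ℝ) [IsProbabilityMeasure μ]
    (μbar : Measure ℝ) (hbar : μbar = μ.map (fun x : ℝ => -x))
    (hfree : ∃ α β : ℝ, 0 < α ∧ 0 < β ∧ ∃ φ₁ φ₂ : ℂ → ℂ,
      ∀ z : ℂ, |z.re| < α * z.im → β < z.im →
        (∫ t : ℝ, (z + φ₁ z - (t : ℂ))⁻¹ ∂μ) = z⁻¹ ∧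
        (∫ t : ℝ, (z + φ₂ z - (t : ℂ))⁻¹ ∂μbar) = z⁻¹ ∧
        (∫ t : ℝ, (z + φ₁ z + φ₂ z - (t : ℂ))⁻¹ ∂(Measure.dirac (0 : ℝ))) = z⁻¹) :
    ∃ a : ℝ, μ = Measure.dirac a := by
  have : IsProbabilityMeasure μbar :=
    hbar ▸ Measure.isProbabilityMeasure_map measurable_neg.aemeasurable
  obtain ⟨α, β, hα, hβ, φ₁, φ₂, h⟩ := hfree
  set z : ℂ := (β + 1 : ℝ) * I
  have hzre : z.re = 0 := by simp [z]
  have hzim : z.im = β + 1 := by simp [z]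
  obtain ⟨hμ, hμbar, hδ⟩ :=
    h z (by rw [hzre, hzim, abs_zero]; positivity) (by rw [hzim]; linarith)
  have hφ : φ₂ z = -φ₁ z := by
    rw [integral_dirac, ofReal_zero, sub_zero, inv_inj] at hδ
    linear_combination hδ
  have hz : (z⁻¹).im < 0 := by
    rw [inv_im, hzim, neg_div, neg_neg_iff_pos]
    exact div_pos (by linarith) (normSq_pos.mpr fun h0 => by simp [h0] at hzim; linarith)
  have hG₁ : cauchyTransform μ (z + φ₁ z) = z⁻¹ := hμ
  have hG₂ : cauchyTransform μbar (z + φ₂ z) = z⁻¹ := hμbar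
  have hle₁ := im_le_im_inv_cauchyTransform (hG₁ ▸ hz)
  have hle₂ := im_le_im_inv_cauchyTransform (hG₂ ▸ hz)
  rw [hG₁, inv_inv, add_im] at hle₁
  rw [hG₂, inv_inv, add_im, hφ, neg_im] at hle₂
  refine ⟨_, eq_dirac_of_im_inv_cauchyTransform_eq (hG₁ ▸ hz) ?_⟩
  rw [hG₁, inv_inv, add_im]
  linarith
end

section
/- Let Q be a right-continuous function of bounded variation on [0,1] with Q(0)=Q(1) (so ∫₀¹ dQ = 0), satisfying ∫₀¹ s^{−b} d|Q|(s) < ∞ for some b > 0, and let v : (0,1) → ℂ be bounded continuous with ∫₀¹ v(st) dQ(s) = 0 for all 0 < t < 1. Then for all complex z with 0 < Re z < b, Λ(z)·X(z) = K(z), where Λ(z) = ∫₀¹ s^{−z} dQ(s), X(z) = ∫₀¹ t^{z−1} v(t) dt, and K(z) = ∫₀¹ s^{−z} (∫_s¹ t^{z−1} v(t) dt) dQ(s). -/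
/-!
Substituting `t = s u` gives `s^{-z} ∫₀^s t^{z-1} v(t) dt = ∫₀¹ u^{z-1} v(su) du`, so splitting
`∫₀¹ = ∫₀^s + ∫_s¹` and applying Fubini shows, for each of `Q₁` and `Q₂` separately,
`Λ X - K = ∫₀¹ u^{z-1} (∫ v(su) dQ(s)) du`; the functional equation makes the two right-hand sides
equal. Integrability comes from `|s^{-z}| ≤ s^{-b}` on `(0,1]` and `|u^{z-1} v(su)| ≤ C u^{Re z - 1}`,
after extending `v` by zero off `(0,1)` to make `(s,u) ↦ v(su)` measurable.
-/

open MeasureTheory Set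

theorem ContinuousOn.measurable_indicator {α γ : Type*} [TopologicalSpace α] [MeasurableSpace α]
    [OpensMeasurableSpace α] [TopologicalSpace γ] [MeasurableSpace γ] [BorelSpace γ] [Zero γ]
    {f : α → γ} {s : Set α} (hf : ContinuousOn f s) (hs : MeasurableSet s) :
    Measurable (s.indicator f) := by
  classical
  rw [← piecewise_eq_indicator]
  exact hf.measurable_piecewise continuousOn_const hs

section IooIntegrals

variable {E : Type*} [NormedAddCommGroup E] [NormedSpace ℝ E]

theorem setIntegral_Ioo_add_Ioo {f : ℝ → E} {a b c : ℝ} (hab : a ≤ b) (hbc : b ≤ c)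
    (hf : IntegrableOn f (Ioo a c)) :
    (∫ t in Ioo a b, f t) + ∫ t in Ioo b c, f t = ∫ t in Ioo a c, f t := by
  have hint {x y : ℝ} (hax : a ≤ x) (hxy : x ≤ y) (hyc : y ≤ c) :
      IntervalIntegrable f volume x y :=
    (intervalIntegrable_iff_integrableOn_Ioo_of_le hxy).2 (hf.mono_set (Ioo_subset_Ioo hax hyc))
  simp only [← integral_Ioc_eq_integral_Ioo, ← intervalIntegral.integral_of_le, hab, hbc,
    hab.trans hbc]
  exact intervalIntegral.integral_add_adjacent_intervals (hint le_rfl hab hbc)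
    (hint hab hbc le_rfl)

theorem setIntegral_Ioo_zero_comp_mul_left (g : ℝ → E) {s : ℝ} (hs : 0 < s) :
    ∫ u in Ioo 0 1, g (s * u) = s⁻¹ • ∫ t in Ioo 0 s, g t := by
  simpa [LinearOrderedField.smul_Ioo hs] using
    Measure.setIntegral_comp_smul_of_pos (μ := volume) g (Ioo (0 : ℝ) 1) hs

end IooIntegrals

theorem norm_ofReal_cpow_mul_le {t : ℝ} (ht : 0 < t) (z : ℂ) {x : ℂ} {C : ℝ} (hx : ‖x‖ ≤ C) :
    ‖(t : ℂ) ^ z * x‖ ≤ C * t ^ z.re := by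
  rw [norm_mul, Complex.norm_cpow_eq_rpow_re_of_pos ht, mul_comm]
  exact mul_le_mul_of_nonneg_right hx (Real.rpow_nonneg ht.le _)

theorem setIntegral_Ioo_cpow_mul_comp_mul_left (w : ℝ → ℂ) (z : ℂ) {s : ℝ} (hs : 0 < s) :
    ∫ u in Ioo (0 : ℝ) 1, (u : ℂ) ^ (z - 1) * w (s * u)
      = (s : ℂ) ^ (-z) * ∫ t in Ioo 0 s, (t : ℂ) ^ (z - 1) * w t := by
  have hs' : (s : ℂ) ≠ 0 := by exact_mod_cast hs.ne'
  have hscale : ∫ t in Ioo 0 s, (t : ℂ) ^ (z - 1) * w t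
      = (s : ℂ) ^ z * ∫ u in Ioo (0 : ℝ) 1, (u : ℂ) ^ (z - 1) * w (s * u) := calc
    _ = s • ∫ u in Ioo (0 : ℝ) 1, ((s * u : ℝ) : ℂ) ^ (z - 1) * w (s * u) := by
      rw [setIntegral_Ioo_zero_comp_mul_left (fun t : ℝ => (t : ℂ) ^ (z - 1) * w t) hs,
        smul_inv_smul₀ hs.ne']
    _ = _ := by
      rw [Complex.real_smul, ← integral_const_mul, ← integral_const_mul]
      refine setIntegral_congr_fun measurableSet_Ioo fun u hu => ?_
      rw [Complex.ofReal_mul, Complex.mul_cpow_ofReal_nonneg hs.le hu.1.le,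
        Complex.cpow_sub _ _ hs', Complex.cpow_one]
      field_simp
  rw [hscale, ← mul_assoc, ← Complex.cpow_add _ _ hs', neg_add_cancel, Complex.cpow_zero, one_mul]

/-- The paper's `Λ(z)`, `X(z)` and `K(z)`, with `μ` in the role of `dQ`. -/
noncomputable def mellinΛ (μ : Measure ℝ) (z : ℂ) : ℂ :=
  ∫ s, (s : ℂ) ^ (-z) ∂μ

noncomputable def mellinX (v : ℝ → ℂ) (z : ℂ) : ℂ :=
  ∫ t in Ioo (0 : ℝ) 1, (t : ℂ) ^ (z - 1) * v t

noncomputable def mellinK (μ : Measure ℝ) (v : ℝ → ℂ) (z : ℂ) : ℂ :=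
  ∫ s, (s : ℂ) ^ (-z) * (∫ t in Ioo s 1, (t : ℂ) ^ (z - 1) * v t) ∂μ

theorem mellinX_congr {v w : ℝ → ℂ} (h : EqOn v w (Ioo 0 1)) (z : ℂ) :
    mellinX v z = mellinX w z :=
  setIntegral_congr_fun measurableSet_Ioo fun t ht => by rw [h ht]

theorem mellinK_congr {μ : Measure ℝ} {v w : ℝ → ℂ} (hμ : ∀ᵐ s ∂μ, s ∈ Ioc 0 1)
    (h : EqOn v w (Ioo 0 1)) (z : ℂ) : mellinK μ v z = mellinK μ w z :=
  integral_congr_ae <| hμ.mono fun s hs => congrArg _ <|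
    setIntegral_congr_fun measurableSet_Ioo fun t ht => by rw [h ⟨hs.1.trans ht.1, ht.2⟩]

section SupportedOnUnitInterval

variable {μ : Measure ℝ} {w : ℝ → ℂ} {C : ℝ} {z : ℂ}

theorem integrableOn_Ioo_cpow_mul (hw : Measurable w) (hC : ∀ t, ‖w t‖ ≤ C) (hz : 0 < z.re) :
    IntegrableOn (fun t : ℝ => (t : ℂ) ^ (z - 1) * w t) (Ioo 0 1) := by
  refine Integrable.mono' (g := fun t => C * t ^ (z - 1).re) ?_
    ((Complex.measurable_ofReal.pow_const _).mul hw).aestronglyMeasurable ?_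
  · exact ((intervalIntegral.integrableOn_Ioo_rpow_iff one_pos).2 (by simpa using hz)).const_mul C
  · filter_upwards [ae_restrict_mem measurableSet_Ioo] with t ht
    exact norm_ofReal_cpow_mul_le ht.1 _ (hC t)

theorem integrable_ofReal_cpow_neg {b : ℝ} (hμ : ∀ᵐ s ∂μ, s ∈ Ioc 0 1)
    (hb : Integrable (fun s : ℝ => s ^ (-b)) μ) (hzb : z.re ≤ b) :
    Integrable (fun s : ℝ => (s : ℂ) ^ (-z)) μ := by
  refine hb.mono' (Complex.measurable_ofReal.pow_const _).aestronglyMeasurable ?_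
  filter_upwards [hμ] with s hs
  rw [Complex.norm_cpow_eq_rpow_re_of_pos hs.1, Complex.neg_re]
  exact Real.rpow_le_rpow_of_exponent_ge hs.1 hs.2 (neg_le_neg hzb)

theorem integrable_cpow_mul_comp_mul_prod [IsFiniteMeasure μ] (hw : Measurable w)
    (hC : ∀ t, ‖w t‖ ≤ C) (hz : 0 < z.re) :
    Integrable (Function.uncurry fun s u : ℝ => (u : ℂ) ^ (z - 1) * w (s * u))
      (μ.prod (volume.restrict (Ioo 0 1))) := by
  refine Integrable.mono' (g := fun p => C * p.2 ^ (z - 1).re) ?_ ?_ ?_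
  · exact (integrable_const C).mul_prod
      ((intervalIntegral.integrableOn_Ioo_rpow_iff one_pos).2 (by simpa using hz))
  · exact ((Complex.measurable_ofReal.comp measurable_snd).pow_const _).mul
      (hw.comp (measurable_fst.mul measurable_snd)) |>.aestronglyMeasurable
  · filter_upwards [Measure.quasiMeasurePreserving_snd.ae (ae_restrict_mem measurableSet_Ioo)]
      with p hp
    exact norm_ofReal_cpow_mul_le hp.1 _ (hC _)

theorem mellinΛ_mul_mellinX_sub_mellinK [IsFiniteMeasure μ] {b : ℝ}
    (hμ : ∀ᵐ s ∂μ, s ∈ Ioc 0 1) (hb : Integrable (fun s : ℝ => s ^ (-b)) μ)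
    (hw : Measurable w) (hC : ∀ t, ‖w t‖ ≤ C) (hz0 : 0 < z.re) (hzb : z.re ≤ b) :
    mellinΛ μ z * mellinX w z - mellinK μ w z
      = ∫ u in Ioo (0 : ℝ) 1, (u : ℂ) ^ (z - 1) * ∫ s, w (s * u) ∂μ := by
  have hF := integrable_cpow_mul_comp_mul_prod (μ := μ) hw hC hz0
  have hK : ∀ᵐ s : ℝ ∂μ, (s : ℂ) ^ (-z) * (∫ t in Ioo s 1, (t : ℂ) ^ (z - 1) * w t)
      = (s : ℂ) ^ (-z) * mellinX w z - ∫ u in Ioo (0 : ℝ) 1, (u : ℂ) ^ (z - 1) * w (s * u) := by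
    filter_upwards [hμ] with s hs
    rw [setIntegral_Ioo_cpow_mul_comp_mul_left w z hs.1, mellinX,
      ← setIntegral_Ioo_add_Ioo hs.1.le hs.2 (integrableOn_Ioo_cpow_mul hw hC hz0)]
    ring
  have hH : Integrable (fun s => ∫ u in Ioo (0 : ℝ) 1, (u : ℂ) ^ (z - 1) * w (s * u)) μ :=
    hF.integral_prod_left
  rw [mellinK, integral_congr_ae hK,
    integral_sub ((integrable_ofReal_cpow_neg hμ hb hzb).mul_const _) hH, integral_mul_const,
    mellinΛ, sub_sub_cancel]
  simp_rw [← integral_const_mul]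
  exact integral_integral_swap hF

theorem mellinΛ_mul_mellinX_sub_mellinK_of_continuousOn [IsFiniteMeasure μ] {b : ℝ} {v : ℝ → ℂ}
    (hμ : ∀ᵐ s ∂μ, s ∈ Ioc 0 1) (hb : Integrable (fun s : ℝ => s ^ (-b)) μ)
    (hv : ContinuousOn v (Ioo 0 1)) (hC : ∀ t ∈ Ioo 0 1, ‖v t‖ ≤ C) (hz0 : 0 < z.re)
    (hzb : z.re ≤ b) :
    mellinΛ μ z * mellinX v z - mellinK μ v z
      = ∫ u in Ioo (0 : ℝ) 1, (u : ℂ) ^ (z - 1) * ∫ s, v (s * u) ∂μ := by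
  set w := (Ioo (0 : ℝ) 1).indicator v
  have hvw : EqOn v w (Ioo 0 1) := fun t ht => (indicator_of_mem ht v).symm
  have hwC (t : ℝ) : ‖w t‖ ≤ max C 0 := by
    by_cases ht : t ∈ Ioo 0 1
    · simp [w, ht, hC t ht]
    · simp [w, ht]
  rw [mellinX_congr hvw, mellinK_congr hμ hvw,
    mellinΛ_mul_mellinX_sub_mellinK hμ hb (hv.measurable_indicator measurableSet_Ioo) hwC hz0 hzb]
  refine setIntegral_congr_fun measurableSet_Ioo fun u hu => ?_
  refine congrArg _ (integral_congr_ae (hμ.mono fun s hs => (hvw ?_).symm))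
  exact ⟨mul_pos hs.1 hu.1, (mul_le_of_le_one_left hu.1.le hs.2).trans_lt hu.2⟩

end SupportedOnUnitInterval

theorem stmt15_general (b : ℝ)
    (Q₁ Q₂ : Measure ℝ) [IsFiniteMeasure Q₁] [IsFiniteMeasure Q₂]
    (hs₁ : Q₁ (Set.Ioc (0 : ℝ) 1)ᶜ = 0) (hs₂ : Q₂ (Set.Ioc (0 : ℝ) 1)ᶜ = 0)
    (hint : Integrable (fun s : ℝ => s ^ (-b)) (Q₁ + Q₂))
    (v : ℝ → ℂ) (hvcont : ContinuousOn v (Set.Ioo 0 1)) (C : ℝ)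
    (hvbdd : ∀ t ∈ Set.Ioo (0 : ℝ) 1, ‖v t‖ ≤ C)
    (heq : ∀ t ∈ Set.Ioo (0 : ℝ) 1, ∫ s : ℝ, v (s * t) ∂Q₁ = ∫ s : ℝ, v (s * t) ∂Q₂) :
    ∀ z : ℂ, 0 < z.re → z.re < b →
      ((∫ s : ℝ, (s : ℂ) ^ (-z) ∂Q₁) - (∫ s : ℝ, (s : ℂ) ^ (-z) ∂Q₂)) *
          (∫ t in Set.Ioo (0 : ℝ) 1, (t : ℂ) ^ (z - 1) * v t) =
        (∫ s : ℝ, (s : ℂ) ^ (-z) * (∫ t in Set.Ioo s 1, (t : ℂ) ^ (z - 1) * v t) ∂Q₁) -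
        (∫ s : ℝ, (s : ℂ) ^ (-z) * (∫ t in Set.Ioo s 1, (t : ℂ) ^ (z - 1) * v t) ∂Q₂) := by
  intro z hz0 hzb
  change (mellinΛ Q₁ z - mellinΛ Q₂ z) * mellinX v z = mellinK Q₁ v z - mellinK Q₂ v z
  have h₁ := mellinΛ_mul_mellinX_sub_mellinK_of_continuousOn (mem_ae_iff.2 hs₁)
    (hint.mono_measure (Measure.le_add_right le_rfl)) hvcont hvbdd hz0 hzb.le
  have h₂ := mellinΛ_mul_mellinX_sub_mellinK_of_continuousOn (mem_ae_iff.2 hs₂)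
    (hint.mono_measure (Measure.le_add_left le_rfl)) hvcont hvbdd hz0 hzb.le
  have hR : ∫ u in Ioo (0 : ℝ) 1, (u : ℂ) ^ (z - 1) * ∫ s, v (s * u) ∂Q₁
      = ∫ u in Ioo (0 : ℝ) 1, (u : ℂ) ^ (z - 1) * ∫ s, v (s * u) ∂Q₂ :=
    setIntegral_congr_fun measurableSet_Ioo fun u hu => by rw [heq u hu]
  linear_combination h₁ - h₂ + hR

/-- Mellin-transform identity: write `Q = Q₁ − Q₂` for finite measures on `(0,1]` of
equal total mass with `∫ s^{−b} d(Q₁+Q₂) < ∞`. If a bounded continuous `v : (0,1) → ℂ`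
satisfies `∫ v(st) dQ(s) = 0` for all `0 < t < 1`, then `Λ(z)·X(z) = K(z)` for
`0 < Re z < b`, where `Λ(z) = ∫ s^{−z} dQ(s)`, `X(z) = ∫₀¹ t^{z−1}v(t) dt`,
`K(z) = ∫ s^{−z}(∫_s¹ t^{z−1}v(t) dt) dQ(s)`. -/
theorem stmt15 (b : ℝ) (hb : 0 < b)
    (Q₁ Q₂ : Measure ℝ) [IsFiniteMeasure Q₁] [IsFiniteMeasure Q₂]
    (hs₁ : Q₁ (Set.Ioc (0 : ℝ) 1)ᶜ = 0) (hs₂ : Q₂ (Set.Ioc (0 : ℝ) 1)ᶜ = 0)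
    (htot : Q₁ Set.univ = Q₂ Set.univ)
    (hint : Integrable (fun s : ℝ => s ^ (-b)) (Q₁ + Q₂))
    (v : ℝ → ℂ) (hvcont : ContinuousOn v (Set.Ioo 0 1)) (C : ℝ)
    (hvbdd : ∀ t ∈ Set.Ioo (0 : ℝ) 1, ‖v t‖ ≤ C)
    (heq : ∀ t ∈ Set.Ioo (0 : ℝ) 1, ∫ s : ℝ, v (s * t) ∂Q₁ = ∫ s : ℝ, v (s * t) ∂Q₂) :
    ∀ z : ℂ, 0 < z.re → z.re < b →
      ((∫ s : ℝ, (s : ℂ) ^ (-z) ∂Q₁) - (∫ s : ℝ, (s : ℂ) ^ (-z) ∂Q₂)) *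
          (∫ t in Set.Ioo (0 : ℝ) 1, (t : ℂ) ^ (z - 1) * v t) =
        (∫ s : ℝ, (s : ℂ) ^ (-z) * (∫ t in Set.Ioo s 1, (t : ℂ) ^ (z - 1) * v t) ∂Q₁) -
        (∫ s : ℝ, (s : ℂ) ^ (-z) * (∫ t in Set.Ioo s 1, (t : ℂ) ^ (z - 1) * v t) ∂Q₂) :=
  stmt15_general b Q₁ Q₂ hs₁ hs₂ hint v hvcont C hvbdd heq
end

section
/- Let μ be a probability measure with compact support whose Voiculescu transform has Laurent expansion φ_μ(z) = Σ_{l≥1} κ_l z^{1−l} near ∞, and suppose the even cumulants satisfy κ₂ = b > 0 and κ_{2l} = 0 for all l ≥ 2. Suppose further that φ_μ satisfies Σ_{j=1}^n a_j φ_μ(z/a_j) = Σ_{k=1}^n b_k φ_μ(z/b_k) for large z ∈ ℂ⁺, where a_j, b_k are nonzero reals, and that Λ₂(2l−1) := Σ_j a_j^{2l−1} − Σ_k b_k^{2l−1} ≠ 0 for all l ≥ 2. Then κ_{2l−1} = 0 for all l ≥ 2, i.e., φ_μ(z) = κ₁ + b/z, so μ is a semicircular measure. -/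
/-!
Rescaling the argument of `φ(z) = Σ κ_{m+1} z^{-m}` turns `a φ(z/a)` into
`Σ κ_{m+1} a^{m+1} z^{-m}`, so the functional equation says that the power series
`Σ κ_{m+1} Λ₂(m+1) w^m` in `w = 1/z` vanishes along the imaginary axis near `w = 0`. By the
principle of isolated zeros all its coefficients vanish; as `Λ₂(2l-1) ≠ 0`, the odd cumulants
`κ_{2l-1}`, `l ≥ 2`, vanish, and together with the even ones only `κ₁ + κ₂/z` is left.
-/

open MeasureTheory Filter Topology FormalMultilinearSeries

/-- The `Λ₂(l)` of the functional equation. -/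
def powerSumDiff {R ι ι' : Type*} [CommRing R] [Fintype ι] [Fintype ι'] (A : ι → R)
    (B : ι' → R) (l : ℕ) : R :=
  ∑ j, A j ^ l - ∑ k, B k ^ l

theorem eq_zero_of_frequently_hasSum_pow_eq_zero {𝕜 : Type*} [NontriviallyNormedField 𝕜]
    [CompleteSpace 𝕜] {c : ℕ → 𝕜}
    (h : ∃ᶠ w in 𝓝[≠] (0 : 𝕜), HasSum (fun n => c n * w ^ n) 0) : c = 0 := by
  set p : FormalMultilinearSeries 𝕜 𝕜 𝕜 := ofScalars 𝕜 c
  have hp_apply : ∀ w n, p n (fun _ => w) = c n * w ^ n := fun w n => ofScalars_apply_eq c w n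
  obtain ⟨w₀, hsum₀, hw₀⟩ := (h.and_eventually self_mem_nhdsWithin).exists
  have hradius : 0 < p.radius := by
    refine lt_of_lt_of_le ?_ (p.le_radius_of_tendsto (r := ‖w₀‖₊) (l := 0) ?_)
    · simpa using hw₀
    · simpa [p, ofScalars_norm] using (hsum₀.summable.tendsto_atTop_zero).norm
  have hp : HasFPowerSeriesAt p.sum p 0 := (p.hasFPowerSeriesOnBall hradius).hasFPowerSeriesAt
  suffices p = 0 from (ofScalars_series_eq_zero 𝕜).mp this
  by_contra hne
  obtain ⟨w, hsum, hne_zero⟩ := (h.and_eventually (hp.locally_ne_zero hne)).exists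
  exact hne_zero (by simpa [FormalMultilinearSeries.sum, hp_apply] using hsum.tsum_eq)

theorem tendsto_inv_I_mul_atTop : Tendsto (fun y : ℝ => (Complex.I * y)⁻¹) atTop (𝓝[≠] 0) := by
  refine tendsto_inv₀_cobounded'.comp (tendsto_norm_atTop_iff_cobounded.mp ?_)
  simpa using tendsto_abs_atTop_atTop

theorem hasSum_mul_comp_div {c : ℕ → ℂ} {s a z : ℂ}
    (h : HasSum (fun n : ℕ => c n * (z / a) ^ (-(n : ℤ))) s) :
    HasSum (fun n : ℕ => c n * a ^ (n + 1) * z⁻¹ ^ n) (a * s) := by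
  have hterm : ∀ n : ℕ, a * (c n * (z / a) ^ (-(n : ℤ))) = c n * a ^ (n + 1) * z⁻¹ ^ n := by
    intro n
    rw [zpow_neg, zpow_natCast, div_pow]
    field_simp
    ring
  simpa only [hterm] using h.mul_left a

theorem lt_norm_div_of_mul_lt {R : ℝ} {a z : ℂ} (ha : a ≠ 0) (h : R * ‖a‖ < ‖z‖) :
    R < ‖z / a‖ := by
  rwa [norm_div, lt_div_iff₀ (norm_pos_iff.mpr ha)]

theorem mul_powerSumDiff_eq_zero {ι ι' : Type*} [Fintype ι] [Fintype ι'] {A : ι → ℂ}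
    {B : ι' → ℂ} (hA : ∀ j, A j ≠ 0) (hB : ∀ k, B k ≠ 0) {c : ℕ → ℂ} {R : ℝ} {φ : ℂ → ℂ}
    (hsum : ∀ z : ℂ, R < ‖z‖ → HasSum (fun n : ℕ => c (n + 1) * z ^ (-(n : ℤ))) (φ z))
    (hfun : ∀ z : ℂ, 0 < z.im → R < ‖z‖ →
      ∑ j, A j * φ (z / A j) = ∑ k, B k * φ (z / B k))
    (m : ℕ) : c (m + 1) * powerSumDiff A B (m + 1) = 0 := by
  refine congrFun (eq_zero_of_frequently_hasSum_pow_eq_zero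
    (c := fun n => c (n + 1) * powerSumDiff A B (n + 1))
    (tendsto_inv_I_mul_atTop.frequently (Eventually.frequently ?_))) m
  filter_upwards [eventually_gt_atTop 0, eventually_gt_atTop R,
    eventually_all.mpr fun j => eventually_gt_atTop (R * ‖A j‖),
    eventually_all.mpr fun k => eventually_gt_atTop (R * ‖B k‖)] with y hy0 hyR hyA hyB
  set z : ℂ := Complex.I * y
  have hz_norm : ‖z‖ = y := by simp [z, hy0.le]
  have hz_im : 0 < z.im := by simpa [z] using hy0
  have hLHS := hasSum_sum fun j (_ : j ∈ Finset.univ) =>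
    hasSum_mul_comp_div (hsum _ (lt_norm_div_of_mul_lt (hA j) (hz_norm ▸ hyA j)))
  have hRHS := hasSum_sum fun k (_ : k ∈ Finset.univ) =>
    hasSum_mul_comp_div (hsum _ (lt_norm_div_of_mul_lt (hB k) (hz_norm ▸ hyB k)))
  have hterm : ∀ n : ℕ, ∑ j, c (n + 1) * A j ^ (n + 1) * z⁻¹ ^ n -
      ∑ k, c (n + 1) * B k ^ (n + 1) * z⁻¹ ^ n =
      c (n + 1) * powerSumDiff A B (n + 1) * z⁻¹ ^ n := by
    intro n
    rw [← Finset.sum_mul, ← Finset.sum_mul, ← Finset.mul_sum, ← Finset.mul_sum, powerSumDiff]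
    ring
  have hdiff := hLHS.sub hRHS
  rw [hfun z hz_im (hz_norm ▸ hyR), sub_self] at hdiff
  simpa only [hterm] using hdiff

theorem ofReal_powerSumDiff {ι ι' : Type*} [Fintype ι] [Fintype ι'] (A : ι → ℝ) (B : ι' → ℝ)
    (l : ℕ) :
    ((powerSumDiff A B l : ℝ) : ℂ) = powerSumDiff (fun j => (A j : ℂ)) (fun k => (B k : ℂ)) l := by
  simp [powerSumDiff]

theorem eq_add_div_of_hasSum_of_eq_zero {c : ℕ → ℂ} {s z : ℂ}
    (h : HasSum (fun n : ℕ => c (n + 1) * z ^ (-(n : ℤ))) s) (hc : ∀ m, 3 ≤ m → c m = 0) :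
    s = c 1 + c 2 / z := by
  have hfin : HasSum (fun n : ℕ => c (n + 1) * z ^ (-(n : ℤ)))
      (∑ n ∈ {0, 1}, c (n + 1) * z ^ (-(n : ℤ))) := by
    refine hasSum_sum_of_ne_finset_zero fun n hn => ?_
    rw [hc (n + 1) (by simp only [Finset.mem_insert, Finset.mem_singleton] at hn; omega), zero_mul]
  rw [h.unique hfin, Finset.sum_pair zero_ne_one]
  simp [div_eq_mul_inv]

theorem stmt16_general (n : ℕ) (A B : Fin n → ℝ) (hA : ∀ j, A j ≠ 0) (hB : ∀ j, B j ≠ 0)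
    (κ : ℕ → ℝ) (b R : ℝ) (hκ2 : κ 2 = b)
    (heven : ∀ l : ℕ, 2 ≤ l → κ (2 * l) = 0)
    (φ : ℂ → ℂ)
    (hsum : ∀ z : ℂ, R < ‖z‖ →
      HasSum (fun j : ℕ => (κ (j + 1) : ℂ) * z ^ (-(j : ℤ))) (φ z))
    (hfun : ∀ z : ℂ, 0 < z.im → R < ‖z‖ →
      ∑ j, ((A j : ℝ) : ℂ) * φ (z / (A j : ℝ)) =
      ∑ k, ((B k : ℝ) : ℂ) * φ (z / (B k : ℝ)))
    (hΛ : ∀ l : ℕ, 2 ≤ l →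
      (∑ j, (A j) ^ (2 * l - 1)) - (∑ k, (B k) ^ (2 * l - 1)) ≠ 0) :
    (∀ l : ℕ, 2 ≤ l → κ (2 * l - 1) = 0) ∧
    (∀ z : ℂ, R < ‖z‖ → φ z = (κ 1 : ℂ) + (b : ℂ) / z) := by
  have hcoef (m : ℕ) : κ (m + 1) * powerSumDiff A B (m + 1) = 0 := by
    have := mul_powerSumDiff_eq_zero (c := fun m => (κ m : ℂ))
      (fun j => Complex.ofReal_ne_zero.mpr (hA j)) (fun k => Complex.ofReal_ne_zero.mpr (hB k))
      hsum hfun m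
    rw [← ofReal_powerSumDiff] at this
    exact_mod_cast this
  have hodd (l : ℕ) (hl : 2 ≤ l) : κ (2 * l - 1) = 0 := by
    have := hcoef (2 * l - 2)
    rw [show 2 * l - 2 + 1 = 2 * l - 1 by omega] at this
    exact (mul_eq_zero.mp this).resolve_right (hΛ l hl)
  have hvanish (m : ℕ) (hm : 3 ≤ m) : κ m = 0 := by
    obtain ⟨l, rfl | rfl⟩ := Nat.even_or_odd' m
    · exact heven l (by omega)
    · have := hodd (l + 1) (by omega)
      rwa [show 2 * (l + 1) - 1 = 2 * l + 1 by omega] at this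
  refine ⟨hodd, fun z hz => ?_⟩
  rw [eq_add_div_of_hasSum_of_eq_zero (c := fun m => (κ m : ℂ)) (hsum z hz)
    fun m hm => by simp [hvanish m hm], hκ2]

/-- If the Voiculescu transform of a compactly supported probability measure `μ` has
Laurent expansion `φ(z) = Σ_{l≥1} κ_l z^{1−l}` near `∞` with `κ₂ = b > 0` and all
higher even cumulants vanishing, and `φ` satisfies
`Σ_j A_j φ(z/A_j) = Σ_k B_k φ(z/B_k)` with `Λ₂(2l−1) ≠ 0` for all `l ≥ 2`, then all
higher odd cumulants vanish too, so `φ(z) = κ₁ + b/z` and `μ` is semicircular. -/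
theorem stmt16 (n : ℕ) (A B : Fin n → ℝ) (hA : ∀ j, A j ≠ 0) (hB : ∀ j, B j ≠ 0)
    (μ : Measure ℝ) [IsProbabilityMeasure μ]
    (hcomp : ∃ K : Set ℝ, IsCompact K ∧ μ Kᶜ = 0)
    (κ : ℕ → ℝ) (b R : ℝ) (hb : 0 < b) (hκ2 : κ 2 = b)
    (heven : ∀ l : ℕ, 2 ≤ l → κ (2 * l) = 0)
    (hR : 0 < R) (φ : ℂ → ℂ)
    (hsum : ∀ z : ℂ, R < ‖z‖ →
      HasSum (fun j : ℕ => (κ (j + 1) : ℂ) * z ^ (-(j : ℤ))) (φ z))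
    (hφμ : ∀ z : ℂ, 0 < z.im → R < ‖z‖ →
      ∫ t : ℝ, (z + φ z - (t : ℂ))⁻¹ ∂μ = z⁻¹)
    (hfun : ∀ z : ℂ, 0 < z.im → R < ‖z‖ →
      ∑ j, ((A j : ℝ) : ℂ) * φ (z / (A j : ℝ)) =
      ∑ k, ((B k : ℝ) : ℂ) * φ (z / (B k : ℝ)))
    (hΛ : ∀ l : ℕ, 2 ≤ l →
      (∑ j, (A j) ^ (2 * l - 1)) - (∑ k, (B k) ^ (2 * l - 1)) ≠ 0) :
    (∀ l : ℕ, 2 ≤ l → κ (2 * l - 1) = 0) ∧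
    (∀ z : ℂ, R < ‖z‖ → φ z = (κ 1 : ℂ) + (b : ℂ) / z) :=
  stmt16_general n A B hA hB κ b R hκ2 heven φ hsum hfun hΛ
end
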